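/- Suppose ∑_{j∈J} γ_j < ∞ and C_j < ∞ for every j. Fix j ≠ k in J. If φ, φ̃ ∈ D(S) agree in every coordinate except possibly the k-th, then |Ξ_j(φ) − Ξ_j(φ̃)| ≤ 2 ((3|E̲| + ∑_{l∈J} γ_l + 2η_{j,0} + 2γ_j)/η_{j,k} + 2) C_j γ_k d_𝕋(φ_k, φ̃_k). -/

import Mathlib

open scoped Real BigOperators
open Real

noncomputable section

/-- Distance between the gaps indexed by `j` and `l`
(equals `dist ([Em j, Ep j], [Em l, Ep l])` when these closed intervals are disjoint). -/
def gapDist {J : Type*} (Em Ep : J → ℝ) (j l : J) : ℝ :=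
  max (Em l - Ep j) (Em j - Ep l)

/-- Length `γ_j = E_j^+ - E_j^-` of the `j`-th gap. -/
def gapLen {J : Type*} (Em Ep : J → ℝ) (j : J) : ℝ := Ep j - Em j

/-- Craig's constant `C_j = (η_{j,0} + γ_j)^{1/2} ∏_{l ≠ j} (1 + γ_l/η_{j,l})^{1/2}`. -/
def CraigC {J : Type*} (Em Ep : J → ℝ) (E0 : ℝ) (j : J) : ℝ :=
  Real.sqrt ((Em j - E0) + gapLen Em Ep j) *
    ∏' l : {l : J // l ≠ j}, Real.sqrt (1 + gapLen Em Ep l / gapDist Em Ep j l)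

/-- `μ_j(φ) = E_j^- + γ_j cos²(φ_j/2) = E_j^- + γ_j (1 + cos φ_j)/2`. -/
def muD {J : Type*} (Em Ep : J → ℝ) (φ : J → Real.Angle) (j : J) : ℝ :=
  Em j + gapLen Em Ep j * ((1 + Real.Angle.cos (φ j)) / 2)

/-- `Q_1(φ) = E̲ + ∑_j (E_j^- + E_j^+ - 2 μ_j)`. -/
def Q1D {J : Type*} (Em Ep : J → ℝ) (E0 : ℝ) (φ : J → Real.Angle) : ℝ :=
  E0 + ∑' j : J, (Em j + Ep j - 2 * muD Em Ep φ j)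

/-- `Ψ_j(φ) = 2 ((μ_j - E̲) ∏_{l≠j} (E_l^- - μ_j)(E_l^+ - μ_j)/(μ_l - μ_j)²)^{1/2}`. -/
def PsiD {J : Type*} (Em Ep : J → ℝ) (E0 : ℝ) (φ : J → Real.Angle) (j : J) : ℝ :=
  2 * Real.sqrt ((muD Em Ep φ j - E0) *
    ∏' l : {l : J // l ≠ j},
      ((Em l - muD Em Ep φ j) * (Ep l - muD Em Ep φ j) /
        (muD Em Ep φ l - muD Em Ep φ j) ^ 2))

/-- `Ξ_j(φ) = -2 (Q_1(φ) + 2 μ_j) Ψ_j(φ)`. -/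
def XiD {J : Type*} (Em Ep : J → ℝ) (E0 : ℝ) (φ : J → Real.Angle) (j : J) : ℝ :=
  -2 * (Q1D Em Ep E0 φ + 2 * muD Em Ep φ j) * PsiD Em Ep E0 φ j


/-!
Write `Ξ_j = -2 (Q_1 + 2μ_j) Ψ_j`. Changing `φ_k` leaves `μ_j` fixed and moves `μ_k` by at
most `γ_k d(φ_k, φ̃_k) / 2` because the cosine is 1-Lipschitz, so `Q_1` moves by at most
`γ_k d(φ_k, φ̃_k)`.
In `Ψ_j` only the `k`-th factor changes, and only through its denominator `(μ_k - μ_j)²`, which is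
at least `η_{j,k}²`: `Ψ_j` gets multiplied by `|μ_k - μ_j| / |μ̃_k - μ_j|`. Every factor of `Ψ_j`
lies between `(1 + γ_l/η_{j,l})⁻¹` and `1 + γ_l/η_{j,l}`; this makes the product converge and gives
`Ψ_j ≤ 2 C_j`. The product rule for differences combines the two estimates.
-/

namespace Real.Angle

theorem abs_cos_le_one (θ : Angle) : |cos θ| ≤ 1 := by
  induction θ using Real.Angle.induction_on with
  | h x => rw [cos_coe]; exact Real.abs_cos_le_one x

theorem abs_cos_sub_cos_le_dist (a b : Angle) : |cos a - cos b| ≤ dist a b := by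
  induction a using Real.Angle.induction_on with | h x =>
  induction b using Real.Angle.induction_on with | h y =>
  set n := round ((2 * π)⁻¹ * (x - y))
  have hdist : dist (x : Angle) y = |x - n * (2 * π) - y| := by
    rw [dist_eq_norm, ← coe_sub, sub_right_comm]
    exact AddCircle.norm_eq (2 * π)
  rw [cos_coe, cos_coe, hdist, ← Real.cos_sub_int_mul_two_pi x n]
  exact Real.abs_cos_sub_cos_le _ _

end Real.Angle

section InfiniteProducts

variable {ι : Type*}

theorem tprod_eq_tprod_mul_div_of_eq_of_ne {α : Type*} [CommGroupWithZero α] [TopologicalSpace α]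
    [ContinuousMul α] [T2Space α] {f g : ι → α} (hf : Multipliable f) {i₀ : ι} (hi₀ : f i₀ ≠ 0)
    (hfg : ∀ i ≠ i₀, g i = f i) : ∏' i, g i = (∏' i, f i) * (g i₀ / f i₀) := by
  classical
  refine HasProd.tprod_eq ?_
  convert hf.hasProd.mul (hasProd_ite_eq i₀ (g i₀ / f i₀)) using 1
  ext i
  by_cases hi : i = i₀
  · subst hi; simp [mul_div_cancel₀ _ hi₀]
  · simp [hi, hfg i hi]

theorem one_add_sum_le_prod_one_add {x : ι → ℝ} (hx : ∀ i, 0 ≤ x i) (s : Finset ι) :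
    1 + ∑ i ∈ s, x i ≤ ∏ i ∈ s, (1 + x i) := by
  classical
  induction s using Finset.cons_induction with
  | empty => simp
  | cons a s _ ih =>
    rw [Finset.sum_cons, Finset.prod_cons]
    nlinarith [hx a, Finset.sum_nonneg fun i (_ : i ∈ s) => hx i]

namespace Real

theorem summable_of_multipliable_one_add {x : ι → ℝ} (hx : ∀ i, 0 ≤ x i)
    (h : Multipliable fun i => 1 + x i) : Summable x := by
  have hone : ∀ i, 1 ≤ 1 + x i := fun i => le_add_of_nonneg_right (hx i)
  refine summable_of_sum_le (c := ∏' i, (1 + x i)) hx fun s => ?_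
  have hprod : ∏ i ∈ s, (1 + x i) ≤ ∏' i, (1 + x i) :=
    ge_of_tendsto h.hasProd <| Filter.eventually_atTop.2 ⟨s, fun t hst =>
      Finset.prod_le_prod_of_subset_of_one_le hst (fun i _ => zero_le_one.trans (hone i))
        fun i _ _ => hone i⟩
  linarith [one_add_sum_le_prod_one_add hx s]

theorem multipliable_of_le_one_add_of_inv_le {f x : ι → ℝ} (hf : ∀ i, 0 < f i)
    (hx : Summable x) (hle : ∀ i, f i ≤ 1 + x i) (hinv : ∀ i, (f i)⁻¹ ≤ 1 + x i) :
    Multipliable f := by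
  refine multipliable_of_summable_log hf <| hx.of_norm_bounded fun i => ?_
  have hlog := log_le_sub_one_of_pos (hf i)
  have hlog_inv := log_le_sub_one_of_pos (inv_pos.2 (hf i))
  rw [log_inv] at hlog_inv
  rw [norm_eq_abs, abs_le]
  constructor <;> linarith [hle i, hinv i]

theorem tprod_le_tprod_of_nonneg {f g : ι → ℝ} (hf0 : ∀ i, 0 ≤ f i) (hfg : ∀ i, f i ≤ g i)
    (hf : Multipliable f) (hg : Multipliable g) : ∏' i, f i ≤ ∏' i, g i :=
  le_of_tendsto_of_tendsto' hf.hasProd hg.hasProd fun _ =>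
    Finset.prod_le_prod (fun i _ => hf0 i) fun i _ => hfg i

theorem hasProd_sq_of_hasProd_sqrt {f : ι → ℝ} (hf : ∀ i, 0 ≤ f i) {a : ℝ}
    (h : HasProd (fun i => √(f i)) a) : HasProd f (a ^ 2) := by
  simpa only [mul_self_sqrt (hf _), ← sq] using h.mul h

end Real

end InfiniteProducts

theorem max_sub_le_abs_sub {a b c d m p : ℝ} (hm : m ∈ Set.Icc a b) (hp : p ∈ Set.Icc c d) :
    max (c - b) (a - d) ≤ |p - m| :=
  max_le (by linarith [le_abs_self (p - m), hm.2, hp.1])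
    (by linarith [neg_abs_le (p - m), hm.1, hp.2])

theorem mul_div_sq_bounds_of_le {η A D B : ℝ} (hη : 0 < η) (hA : η ≤ A) (hAD : A ≤ D)
    (hDB : D ≤ B) :
    0 < A * B / D ^ 2 ∧ A * B / D ^ 2 ≤ 1 + (B - A) / η ∧ D ^ 2 / (A * B) ≤ 1 + (B - A) / η := by
  have hA0 : 0 < A := hη.trans_le hA
  have hD0 : 0 < D := hA0.trans_le hAD
  have hB0 : 0 < B := hD0.trans_le hDB
  have hBA : B / A ≤ 1 + (B - A) / η := by
    rw [show B / A = 1 + (B - A) / A by field_simp; ring]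
    gcongr
    linarith
  refine ⟨by positivity, ?_, ?_⟩
  · calc A * B / D ^ 2 ≤ A * B / A ^ 2 := by gcongr
      _ = B / A := by field_simp
      _ ≤ _ := hBA
  · calc D ^ 2 / (A * B) ≤ B ^ 2 / (A * B) := by gcongr
      _ = B / A := by field_simp
      _ ≤ _ := hBA

theorem gap_factor_bounds {a b c d m p : ℝ} (hm : m ∈ Set.Icc a b) (hp : p ∈ Set.Icc c d)
    (hη : 0 < max (c - b) (a - d)) :
    0 < (c - m) * (d - m) / (p - m) ^ 2 ∧
      (c - m) * (d - m) / (p - m) ^ 2 ≤ 1 + (d - c) / max (c - b) (a - d) ∧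
      ((c - m) * (d - m) / (p - m) ^ 2)⁻¹ ≤ 1 + (d - c) / max (c - b) (a - d) := by
  rw [inv_div]
  rcases le_total (a - d) (c - b) with h | h
  · rw [max_eq_left h] at hη ⊢
    have := mul_div_sq_bounds_of_le hη (A := c - m) (D := p - m) (B := d - m)
      (by linarith [hm.2]) (by linarith [hp.1]) (by linarith [hp.2])
    simpa only [sub_sub_sub_cancel_right] using this
  · rw [max_eq_right h] at hη ⊢
    have := mul_div_sq_bounds_of_le hη (A := m - d) (D := m - p) (B := m - c)
      (by linarith [hm.1]) (by linarith [hp.2]) (by linarith [hp.1])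
    have hnum : (c - m) * (d - m) = (m - d) * (m - c) := by ring
    rw [hnum, ← neg_sub m p, neg_sq]
    simpa only [sub_sub_sub_cancel_left] using this

section GapCoordinates

variable {J : Type*} {Em Ep : J → ℝ} {E0 : ℝ}

theorem muD_mem_Icc {j : J} (h : Em j ≤ Ep j) (φ : J → Real.Angle) :
    muD Em Ep φ j ∈ Set.Icc (Em j) (Ep j) := by
  have hcos := abs_le.1 (Real.Angle.abs_cos_le_one (φ j))
  have hγ : 0 ≤ gapLen Em Ep j := sub_nonneg.2 h
  have ht0 : 0 ≤ (1 + Real.Angle.cos (φ j)) / 2 := by linarith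
  have ht1 : (1 + Real.Angle.cos (φ j)) / 2 ≤ 1 := by linarith
  refine ⟨le_add_of_nonneg_right (mul_nonneg hγ ht0), ?_⟩
  calc muD Em Ep φ j ≤ Em j + gapLen Em Ep j := by
        unfold muD; gcongr; exact mul_le_of_le_one_right hγ ht1
    _ = Ep j := by unfold gapLen; ring

theorem muD_congr {φ ψ : J → Real.Angle} {j : J} (h : φ j = ψ j) :
    muD Em Ep φ j = muD Em Ep ψ j := by
  rw [muD, muD, h]

theorem abs_muD_sub_muD_le {j : J} (h : Em j ≤ Ep j) (φ ψ : J → Real.Angle) :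
    |muD Em Ep φ j - muD Em Ep ψ j| ≤ gapLen Em Ep j / 2 * dist (φ j) (ψ j) := by
  have hdiff : muD Em Ep φ j - muD Em Ep ψ j
      = gapLen Em Ep j / 2 * (Real.Angle.cos (φ j) - Real.Angle.cos (ψ j)) := by
    unfold muD; ring
  rw [hdiff, abs_mul, abs_of_nonneg (by unfold gapLen; linarith)]
  exact mul_le_mul_of_nonneg_left (Real.Angle.abs_cos_sub_cos_le_dist _ _)
    (by unfold gapLen; linarith)

theorem abs_add_sub_two_muD_le {l : J} (h : Em l ≤ Ep l) (φ : J → Real.Angle) :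
    |Em l + Ep l - 2 * muD Em Ep φ l| ≤ gapLen Em Ep l := by
  obtain ⟨h1, h2⟩ := muD_mem_Icc h φ
  rw [abs_le]; unfold gapLen; constructor <;> linarith

theorem summable_add_sub_two_muD (hle : ∀ l, Em l ≤ Ep l)
    (hsum : Summable fun l => gapLen Em Ep l) (φ : J → Real.Angle) :
    Summable fun l => Em l + Ep l - 2 * muD Em Ep φ l :=
  hsum.of_norm_bounded (f := fun l => Em l + Ep l - 2 * muD Em Ep φ l)
    fun l => abs_add_sub_two_muD_le (hle l) φ

theorem Q1D_sub_Q1D (hle : ∀ l, Em l ≤ Ep l) (hsum : Summable fun l => gapLen Em Ep l)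
    {φ ψ : J → Real.Angle} {k : J} (hagree : ∀ l, l ≠ k → φ l = ψ l) :
    Q1D Em Ep E0 φ - Q1D Em Ep E0 ψ = 2 * (muD Em Ep ψ k - muD Em Ep φ k) := by
  have hsub := (summable_add_sub_two_muD hle hsum φ).tsum_sub (summable_add_sub_two_muD hle hsum ψ)
  rw [tsum_eq_single k fun l hl => by rw [muD_congr (hagree l hl), sub_self]] at hsub
  unfold Q1D
  linarith

theorem abs_Q1D_sub_le (hle : ∀ l, Em l ≤ Ep l) (hsum : Summable fun l => gapLen Em Ep l)
    (φ : J → Real.Angle) : |Q1D Em Ep E0 φ - E0| ≤ ∑' l, gapLen Em Ep l := by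
  rw [Q1D, add_sub_cancel_left]
  exact tsum_of_norm_bounded (f := fun l => Em l + Ep l - 2 * muD Em Ep φ l) hsum.hasSum
    fun l => abs_add_sub_two_muD_le (hle l) φ

theorem abs_Q1D_add_two_muD_le (hle : ∀ l, Em l ≤ Ep l) (hsum : Summable fun l => gapLen Em Ep l)
    {j : J} (hE0 : E0 ≤ Em j) (φ : J → Real.Angle) :
    |Q1D Em Ep E0 φ + 2 * muD Em Ep φ j|
      ≤ 3 * |E0| + (∑' l, gapLen Em Ep l) + 2 * (Em j - E0) + 2 * gapLen Em Ep j := by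
  obtain ⟨h1, h2⟩ := muD_mem_Icc (hle j) φ
  have hQ := abs_Q1D_sub_le (E0 := E0) hle hsum φ
  have hμ : |muD Em Ep φ j| ≤ |E0| + (Em j - E0) + gapLen Em Ep j := by
    rw [abs_le]; unfold gapLen at *
    constructor <;> linarith [le_abs_self E0, neg_abs_le E0]
  calc |Q1D Em Ep E0 φ + 2 * muD Em Ep φ j|
      ≤ |Q1D Em Ep E0 φ - E0| + |E0| + 2 * |muD Em Ep φ j| := by
        have := abs_add_three (Q1D Em Ep E0 φ - E0) E0 (2 * muD Em Ep φ j)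
        rwa [abs_mul, abs_two, sub_add_cancel] at this
    _ ≤ _ := by linarith

end GapCoordinates

section Psi

variable {J : Type*} {Em Ep : J → ℝ} {E0 : ℝ}

def psiFactor (Em Ep : J → ℝ) (φ : J → Real.Angle) (j l : J) : ℝ :=
  (Em l - muD Em Ep φ j) * (Ep l - muD Em Ep φ j) / (muD Em Ep φ l - muD Em Ep φ j) ^ 2

theorem PsiD_eq_psiFactor (φ : J → Real.Angle) (j : J) :
    PsiD Em Ep E0 φ j =
      2 * √((muD Em Ep φ j - E0) * ∏' l : {l : J // l ≠ j}, psiFactor Em Ep φ j l) :=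
  rfl

theorem PsiD_nonneg (φ : J → Real.Angle) (j : J) : 0 ≤ PsiD Em Ep E0 φ j :=
  mul_nonneg zero_le_two (Real.sqrt_nonneg _)

theorem psiFactor_bounds (hle : ∀ l, Em l ≤ Ep l) {j l : J} (hjl : 0 < gapDist Em Ep j l)
    (φ : J → Real.Angle) :
    0 < psiFactor Em Ep φ j l ∧
      psiFactor Em Ep φ j l ≤ 1 + gapLen Em Ep l / gapDist Em Ep j l ∧
      (psiFactor Em Ep φ j l)⁻¹ ≤ 1 + gapLen Em Ep l / gapDist Em Ep j l :=
  gap_factor_bounds (muD_mem_Icc (hle j) φ) (muD_mem_Icc (hle l) φ) hjl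

theorem summable_gapLen_div_gapDist (hle : ∀ l, Em l ≤ Ep l) {j : J}
    (hsep : ∀ l, j ≠ l → 0 < gapDist Em Ep j l)
    (hC : Multipliable fun l : {l : J // l ≠ j} => √(1 + gapLen Em Ep l / gapDist Em Ep j l)) :
    Summable fun l : {l : J // l ≠ j} => gapLen Em Ep l / gapDist Em Ep j l := by
  have hx : ∀ l : {l : J // l ≠ j}, 0 ≤ gapLen Em Ep l / gapDist Em Ep j l := fun l =>
    div_nonneg (sub_nonneg.2 (hle l)) (hsep l (Ne.symm l.2)).le
  exact Real.summable_of_multipliable_one_add hx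
    (Real.hasProd_sq_of_hasProd_sqrt (fun l => by linarith [hx l]) hC.hasProd).multipliable

theorem multipliable_psiFactor (hle : ∀ l, Em l ≤ Ep l) {j : J}
    (hsep : ∀ l, j ≠ l → 0 < gapDist Em Ep j l)
    (hC : Multipliable fun l : {l : J // l ≠ j} => √(1 + gapLen Em Ep l / gapDist Em Ep j l))
    (φ : J → Real.Angle) :
    Multipliable fun l : {l : J // l ≠ j} => psiFactor Em Ep φ j l :=
  Real.multipliable_of_le_one_add_of_inv_le
    (fun l => (psiFactor_bounds hle (hsep l (Ne.symm l.2)) φ).1)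
    (summable_gapLen_div_gapDist hle hsep hC)
    (fun l => (psiFactor_bounds hle (hsep l (Ne.symm l.2)) φ).2.1)
    (fun l => (psiFactor_bounds hle (hsep l (Ne.symm l.2)) φ).2.2)

theorem PsiD_le_two_CraigC (hle : ∀ l, Em l ≤ Ep l) {j : J} (hE0 : E0 ≤ Em j)
    (hsep : ∀ l, j ≠ l → 0 < gapDist Em Ep j l)
    (hC : Multipliable fun l : {l : J // l ≠ j} => √(1 + gapLen Em Ep l / gapDist Em Ep j l))
    (φ : J → Real.Angle) :
    PsiD Em Ep E0 φ j ≤ 2 * CraigC Em Ep E0 j := by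
  set C := ∏' l : {l : J // l ≠ j}, √(1 + gapLen Em Ep l / gapDist Em Ep j l)
  have hbounds := fun l : {l : J // l ≠ j} => psiFactor_bounds hle (hsep l (Ne.symm l.2)) φ
  have hprod : HasProd (fun l : {l : J // l ≠ j} => 1 + gapLen Em Ep l / gapDist Em Ep j l)
      (C ^ 2) :=
    Real.hasProd_sq_of_hasProd_sqrt (fun l => ((hbounds l).1.trans_le (hbounds l).2.1).le)
      hC.hasProd
  have hF : ∏' l : {l : J // l ≠ j}, psiFactor Em Ep φ j l ≤ C ^ 2 :=
    hprod.tprod_eq ▸ Real.tprod_le_tprod_of_nonneg (fun l => (hbounds l).1.le)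
      (fun l => (hbounds l).2.1) (multipliable_psiFactor hle hsep hC φ) hprod.multipliable
  obtain ⟨hμ0, hμ1⟩ := muD_mem_Icc (hle j) φ
  have hμ : muD Em Ep φ j - E0 ≤ (Em j - E0) + gapLen Em Ep j := by unfold gapLen; linarith
  rw [PsiD_eq_psiFactor, CraigC]
  calc 2 * √((muD Em Ep φ j - E0) * ∏' l : {l : J // l ≠ j}, psiFactor Em Ep φ j l)
      ≤ 2 * √(((Em j - E0) + gapLen Em Ep j) * C ^ 2) := by
        refine mul_le_mul_of_nonneg_left (Real.sqrt_le_sqrt ?_) zero_le_two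
        exact mul_le_mul hμ hF (tprod_nonneg fun l => (hbounds l).1.le) (by linarith)
    _ = 2 * (√((Em j - E0) + gapLen Em Ep j) * C) := by
        rw [Real.sqrt_mul (by linarith), Real.sqrt_sq (tprod_nonneg fun _ => Real.sqrt_nonneg _)]

/-- Moving `φ` in the `k`-th coordinate only changes the `k`-th factor of `Ψ_j`, and
the numerator of that factor does not involve `φ_k`. -/
theorem PsiD_eq_mul_of_agree (hle : ∀ l, Em l ≤ Ep l) {j k : J}
    (hsep : ∀ l, j ≠ l → 0 < gapDist Em Ep j l)
    (hC : Multipliable fun l : {l : J // l ≠ j} => √(1 + gapLen Em Ep l / gapDist Em Ep j l))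
    (hjk : j ≠ k) {φ ψ : J → Real.Angle} (hagree : ∀ l, l ≠ k → φ l = ψ l) :
    PsiD Em Ep E0 ψ j = PsiD Em Ep E0 φ j *
      (|muD Em Ep φ k - muD Em Ep φ j| / |muD Em Ep ψ k - muD Em Ep φ j|) := by
  have hμj : muD Em Ep ψ j = muD Em Ep φ j := (muD_congr (hagree j hjk)).symm
  have hpos := (psiFactor_bounds hle (hsep k hjk) φ).1
  have hprod : ∏' l : {l : J // l ≠ j}, psiFactor Em Ep ψ j l
      = (∏' l : {l : J // l ≠ j}, psiFactor Em Ep φ j l)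
        * (psiFactor Em Ep ψ j k / psiFactor Em Ep φ j k) :=
    tprod_eq_tprod_mul_div_of_eq_of_ne (multipliable_psiFactor hle hsep hC φ)
      (i₀ := ⟨k, hjk.symm⟩) hpos.ne' fun l hl => by
        have hlk : (l : J) ≠ k := fun h => hl (Subtype.ext h)
        simp only [psiFactor, hμj, muD_congr (hagree l hlk)]
  have hne : ∀ χ : J → Real.Angle, muD Em Ep χ k - muD Em Ep φ j ≠ 0 := fun χ h =>
    (hsep k hjk).not_ge <| by
      have := max_sub_le_abs_sub (muD_mem_Icc (hle j) φ) (muD_mem_Icc (hle k) χ)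
      rwa [h, abs_zero] at this
  have hnum : (Em k - muD Em Ep φ j) * (Ep k - muD Em Ep φ j) ≠ 0 := fun h => by
    simp [psiFactor, h] at hpos
  have hratio : psiFactor Em Ep ψ j k / psiFactor Em Ep φ j k
      = ((muD Em Ep φ k - muD Em Ep φ j) / (muD Em Ep ψ k - muD Em Ep φ j)) ^ 2 := by
    have := hne φ
    have := hne ψ
    simp only [psiFactor, hμj]
    field_simp
    exact div_self hnum
  rw [PsiD_eq_psiFactor, PsiD_eq_psiFactor, hμj, hprod, hratio, ← mul_assoc,
    Real.sqrt_mul' _ (sq_nonneg _), Real.sqrt_sq_eq_abs, abs_div]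
  ring

theorem abs_PsiD_sub_PsiD_le (hle : ∀ l, Em l ≤ Ep l) {j k : J} (hE0 : E0 ≤ Em j)
    (hsep : ∀ l, j ≠ l → 0 < gapDist Em Ep j l)
    (hC : Multipliable fun l : {l : J // l ≠ j} => √(1 + gapLen Em Ep l / gapDist Em Ep j l))
    (hjk : j ≠ k) {φ ψ : J → Real.Angle} (hagree : ∀ l, l ≠ k → φ l = ψ l) :
    |PsiD Em Ep E0 φ j - PsiD Em Ep E0 ψ j|
      ≤ CraigC Em Ep E0 j * gapLen Em Ep k * dist (φ k) (ψ k) / gapDist Em Ep j k := by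
  have hψ := PsiD_eq_mul_of_agree (E0 := E0) hle hsep hC hjk hagree
  set da := muD Em Ep φ k - muD Em Ep φ j
  set db := muD Em Ep ψ k - muD Em Ep φ j
  have hη : gapDist Em Ep j k ≤ |db| :=
    max_sub_le_abs_sub (muD_mem_Icc (hle j) φ) (muD_mem_Icc (hle k) ψ)
  have hdb : 0 < |db| := (hsep k hjk).trans_le hη
  have hnum : |(|db| - |da|)| ≤ gapLen Em Ep k / 2 * dist (φ k) (ψ k) :=
    calc |(|db| - |da|)| ≤ |db - da| := abs_abs_sub_abs_le_abs_sub _ _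
      _ = |muD Em Ep ψ k - muD Em Ep φ k| := by rw [sub_sub_sub_cancel_right]
      _ ≤ gapLen Em Ep k / 2 * dist (φ k) (ψ k) := by
        rw [dist_comm]; exact abs_muD_sub_muD_le (hle k) ψ φ
  have hdiff : PsiD Em Ep E0 φ j - PsiD Em Ep E0 ψ j
      = PsiD Em Ep E0 φ j * ((|db| - |da|) / |db|) := by
    rw [hψ]
    field_simp
  have hΨ := PsiD_le_two_CraigC hle hE0 hsep hC φ
  rw [hdiff, abs_mul, abs_of_nonneg (PsiD_nonneg φ j), abs_div, abs_abs]
  calc PsiD Em Ep E0 φ j * (|(|db| - |da|)| / |db|)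
      ≤ 2 * CraigC Em Ep E0 j * (gapLen Em Ep k / 2 * dist (φ k) (ψ k) / gapDist Em Ep j k) :=
        mul_le_mul hΨ (div_le_div₀ ((abs_nonneg _).trans hnum) hnum (hsep k hjk) hη)
          (by positivity) ((PsiD_nonneg φ j).trans hΨ)
    _ = CraigC Em Ep E0 j * gapLen Em Ep k * dist (φ k) (ψ k) / gapDist Em Ep j k := by ring

end Psi

theorem xi_single_coordinate_lipschitz_general
    {J : Type*} (Em Ep : J → ℝ) (E0 : ℝ)
    (hlt : ∀ j, Em j < Ep j) (hE0 : ∀ j, E0 < Em j)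
    (hsep : ∀ j l : J, j ≠ l → 0 < gapDist Em Ep j l)
    (hsum : Summable fun j => gapLen Em Ep j)
    (hCfin : ∀ j, Multipliable fun l : {l : J // l ≠ j} =>
      Real.sqrt (1 + gapLen Em Ep l / gapDist Em Ep j l))
    (j k : J) (hjk : j ≠ k)
    (φ ψ : J → Real.Angle) (hagree : ∀ l : J, l ≠ k → φ l = ψ l) :
    |XiD Em Ep E0 φ j - XiD Em Ep E0 ψ j| ≤
      2 * ((3 * |E0| + (∑' l : J, gapLen Em Ep l) + 2 * (Em j - E0) + 2 * gapLen Em Ep j) /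
            gapDist Em Ep j k + 2) *
        CraigC Em Ep E0 j * gapLen Em Ep k * dist (φ k) (ψ k) := by
  have hle : ∀ l, Em l ≤ Ep l := fun l => (hlt l).le
  set A := 3 * |E0| + (∑' l : J, gapLen Em Ep l) + 2 * (Em j - E0) + 2 * gapLen Em Ep j
  have hQ : |Q1D Em Ep E0 φ - Q1D Em Ep E0 ψ| ≤ gapLen Em Ep k * dist (φ k) (ψ k) := by
    rw [Q1D_sub_Q1D hle hsum hagree, abs_mul, abs_two, abs_sub_comm]
    linarith [abs_muD_sub_muD_le (hle k) φ ψ]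
  have hΨ : |PsiD Em Ep E0 φ j| ≤ 2 * CraigC Em Ep E0 j := by
    rw [abs_of_nonneg (PsiD_nonneg φ j)]
    exact PsiD_le_two_CraigC hle (hE0 j).le (hsep j) (hCfin j) φ
  have hQψ : |Q1D Em Ep E0 ψ + 2 * muD Em Ep ψ j| ≤ A :=
    abs_Q1D_add_two_muD_le hle hsum (hE0 j).le ψ
  have hΔΨ := abs_PsiD_sub_PsiD_le hle (hE0 j).le (hsep j) (hCfin j) hjk hagree
  have hXi : XiD Em Ep E0 φ j - XiD Em Ep E0 ψ j
      = -2 * ((Q1D Em Ep E0 φ - Q1D Em Ep E0 ψ) * PsiD Em Ep E0 φ j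
        + (Q1D Em Ep E0 ψ + 2 * muD Em Ep ψ j) * (PsiD Em Ep E0 φ j - PsiD Em Ep E0 ψ j)) := by
    rw [XiD, XiD, muD_congr (hagree j hjk)]
    ring
  have hη := hsep j k hjk
  calc |XiD Em Ep E0 φ j - XiD Em Ep E0 ψ j|
      ≤ 2 * (gapLen Em Ep k * dist (φ k) (ψ k) * (2 * CraigC Em Ep E0 j)
        + A * (CraigC Em Ep E0 j * gapLen Em Ep k * dist (φ k) (ψ k) / gapDist Em Ep j k)) := by
        rw [hXi, abs_mul, abs_neg, abs_two]
        refine mul_le_mul_of_nonneg_left ((abs_add_le _ _).trans ?_) zero_le_two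
        rw [abs_mul, abs_mul]
        exact add_le_add (mul_le_mul hQ hΨ (abs_nonneg _) ((abs_nonneg _).trans hQ))
          (mul_le_mul hQψ hΔΨ (abs_nonneg _) ((abs_nonneg _).trans hQψ))
    _ = 2 * (A / gapDist Em Ep j k + 2) *
          CraigC Em Ep E0 j * gapLen Em Ep k * dist (φ k) (ψ k) := by
        field_simp
        ring

/-- Single-coordinate Lipschitz estimate for `Ξ_j` in the `k`-th coordinate (`k ≠ j`):
if `φ, φ̃` agree in every coordinate except possibly the `k`-th, then
`|Ξ_j(φ) - Ξ_j(φ̃)| ≤ 2((3|E̲| + ∑_l γ_l + 2η_{j,0} + 2γ_j)/η_{j,k} + 2) C_j γ_k d_𝕋(φ_k, φ̃_k)`. -/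
theorem xi_single_coordinate_lipschitz
    {J : Type*} [Countable J] (Em Ep : J → ℝ) (E0 : ℝ)
    (hlt : ∀ j, Em j < Ep j) (hE0 : ∀ j, E0 < Em j)
    (hsep : ∀ j l : J, j ≠ l → 0 < gapDist Em Ep j l)
    (hsum : Summable fun j => gapLen Em Ep j)
    (hCfin : ∀ j, Multipliable fun l : {l : J // l ≠ j} =>
      Real.sqrt (1 + gapLen Em Ep l / gapDist Em Ep j l))
    (j k : J) (hjk : j ≠ k)
    (φ ψ : J → Real.Angle) (hagree : ∀ l : J, l ≠ k → φ l = ψ l) :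
    |XiD Em Ep E0 φ j - XiD Em Ep E0 ψ j| ≤
      2 * ((3 * |E0| + (∑' l : J, gapLen Em Ep l) + 2 * (Em j - E0) + 2 * gapLen Em Ep j) /
            gapDist Em Ep j k + 2) *
        CraigC Em Ep E0 j * gapLen Em Ep k * dist (φ k) (ψ k) :=
  xi_single_coordinate_lipschitz_general Em Ep E0 hlt hE0 hsep hsum hCfin j k hjk φ ψ hagree
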